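/- Let p ≡ 1 (mod 6) be a prime, let χ be a nontrivial cubic multiplicative character of F_p, and let G_0, G_1, G_2 be the associated Gauss periods. Then there exist integers u, v with 4p = u² + 27v² and u ≡ 1 (mod 3) such that, setting a = (2p − u + 9v − 4)/18, b = (2p − u − 9v − 4)/18, and c = (p + 1 + u)/9, one has a, b, c ∈ ℤ and G_0 G_1 = a G_0 + b G_1 + c G_2, G_1 G_2 = a G_1 + b G_2 + c G_0, and G_2 G_0 = a G_2 + b G_0 + c G_1. -/

import Mathlib

/-! Write `ω = ζ₃`, `g = g(χ)`, `g' = g(χ²)` for the Gauss sums and `J = J(χ, χ)`. Orthogonality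
of the cube roots of unity gives `3 G_j = -1 + ω^{2j} g + ω^j g'`. The Gauss sums satisfy
`g² = J g'`, `g'² = J̄ g` and `g g' = p = J J̄`, and `J ≡ -1 mod (ω - 1)²` forces
`J = A + B ω` with `A ≡ 2` and `B ≡ 0 (mod 3)`; then `u = 2A - B` and `v = B / 3`. Expanding
`(3 G₀)(3 G₁)` with these relations leaves an affine expression in `G₀` and `G₂`, which becomes
linear through `G₀ + G₁ + G₂ = -1`. Finally `(g, g') ↦ (ω² g, ω g')` preserves all relations and
shifts `G_j` to `G_{j+1}`, which gives the other two identities.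
-/

open Finset

/-- `ζ_p = exp(2πi/p)`. -/
noncomputable def zetaC (p : ℕ) : ℂ := Complex.exp (2 * (Real.pi : ℂ) * Complex.I / (p : ℂ))

/-- `ζ_3 = exp(2πi/3)`. -/
noncomputable def zeta3 : ℂ := Complex.exp (2 * (Real.pi : ℂ) * Complex.I / 3)

open scoped Classical in
/-- The Gauss period `G_j = Σ_{x ∈ F_p^*, χ(x) = ζ_3^j} ζ_p^x` attached to a (cubic)
character `χ` on the prime field `F_p = ZMod p`. -/
noncomputable def gaussPeriodP (p : ℕ) [NeZero p] (χ : ZMod p → ℂ) (j : ℕ) : ℂ :=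
  ∑ x ∈ Finset.univ.filter (fun x : ZMod p => x ≠ 0 ∧ χ x = zeta3 ^ j), zetaC p ^ x.val

/-- The Gauss sum `G_1(1,χ) = Σ_{y ∈ F_p} χ(y) ζ_p^y` over the prime field `F_p = ZMod p`. -/
noncomputable def gaussSumP (p : ℕ) [NeZero p] (χ : ZMod p → ℂ) : ℂ :=
  ∑ y : ZMod p, χ y * zetaC p ^ y.val

theorem IsPrimitiveRoot.sq_add_self_add_one {R : Type*} [CommRing R] [IsDomain R] {ω : R}
    (hω : IsPrimitiveRoot ω 3) : ω ^ 2 + ω + 1 = 0 := by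
  have h := hω.geom_sum_eq_zero (by norm_num)
  simp only [Finset.sum_range_succ, Finset.sum_range_zero] at h
  linear_combination h

theorem one_add_mul_add_mul_sq_eq_ite {R : Type*} [CommRing R] [IsDomain R] [DecidableEq R]
    {ω t : R} (hω : ω ^ 3 = 1) (ht : t ^ 3 = 1) (j : ℕ) :
    1 + ω ^ (2 * j) * t + ω ^ j * t ^ 2 = if t = ω ^ j then 3 else 0 := by
  have hωj : ω ^ (3 * j) = 1 := by rw [pow_mul, hω, one_pow]
  -- `r = ω⁻ʲ t` is a cube root of unity, equal to `1` exactly when `t = ωʲ`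
  set r := ω ^ (2 * j) * t with hr
  have hr3 : r ^ 3 = 1 := by linear_combination ω ^ (6 * j) * ht + (ω ^ (3 * j) + 1) * hωj
  have htr : t = ω ^ j * r := by linear_combination (-t) * hωj
  have hsum : 1 + ω ^ (2 * j) * t + ω ^ j * t ^ 2 = 1 + r + r ^ 2 := by
    linear_combination -ω ^ j * t ^ 2 * hωj
  rw [hsum]
  split_ifs with h
  · have : r = 1 := by rw [hr, h]; linear_combination hωj
    rw [this]; norm_num
  · have hr1 : r - 1 ≠ 0 := fun h1 ↦ h (by rw [htr, sub_eq_zero.mp h1, mul_one])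
    have hfac : (r - 1) * (1 + r + r ^ 2) = 0 := by linear_combination hr3
    exact (mul_eq_zero.mp hfac).resolve_left hr1

theorem exists_intCast_add_intCast_mul_of_mem_adjoin {R : Type*} [CommRing R] {ω z : R}
    (hω : ω ^ 2 + ω + 1 = 0) (hz : z ∈ Algebra.adjoin ℤ {ω}) : ∃ m n : ℤ, z = m + n * ω := by
  induction hz using Algebra.adjoin_induction with
  | mem x hx => exact ⟨0, 1, by simp [Set.mem_singleton_iff.mp hx]⟩
  | algebraMap r => exact ⟨r, 0, by simp⟩
  | add x y _ _ hx hy =>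
    obtain ⟨m₁, n₁, rfl⟩ := hx
    obtain ⟨m₂, n₂, rfl⟩ := hy
    exact ⟨m₁ + m₂, n₁ + n₂, by push_cast; ring⟩
  | mul x y _ _ hx hy =>
    obtain ⟨m₁, n₁, rfl⟩ := hx
    obtain ⟨m₂, n₂, rfl⟩ := hy
    exact ⟨m₁ * m₂ - n₁ * n₂, m₁ * n₂ + n₁ * m₂ - n₁ * n₂, by
      push_cast; linear_combination (n₁ : R) * n₂ * hω⟩

theorem exists_jacobiSum_eq_of_pow_three_eq_one {F R : Type*} [Field F] [Fintype F] [CommRing R]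
    [IsDomain R] {χ φ : MulChar F R} (hχ : χ ^ 3 = 1) (hφ : φ ^ 3 = 1)
    (hF : 3 ∣ Fintype.card F - 1) {ω : R} (hω : IsPrimitiveRoot ω 3) :
    ∃ s v : ℤ, jacobiSum χ φ = 3 * s + 2 + 3 * v * ω := by
  obtain ⟨z, hz, hJ⟩ := exists_jacobiSum_eq_neg_one_add (by norm_num) hχ hφ hF hω
  obtain ⟨m, n, rfl⟩ := exists_intCast_add_intCast_mul_of_mem_adjoin hω.sq_add_self_add_one hz
  refine ⟨n - 1, n - m, ?_⟩
  rw [hJ]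
  push_cast
  linear_combination (m + n * ω - 3 * n) * hω.sq_add_self_add_one

theorem star_jacobiSum {R : Type*} [CommRing R] [Fintype R] (χ φ : MulChar R ℂ) :
    star (jacobiSum χ φ) = jacobiSum χ⁻¹ φ⁻¹ := by
  simp only [jacobiSum, star_sum, star_mul', MulChar.star_apply']

theorem gaussSum_sq_eq_jacobiSum_mul {F R : Type*} [Field F] [Fintype F] [CommRing R]
    [IsDomain R] {χ : MulChar F R} (hχ : χ ^ 2 ≠ 1) (ψ : AddChar F R) :
    gaussSum χ ψ ^ 2 = jacobiSum χ χ * gaussSum (χ ^ 2) ψ := by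
  rw [sq, sq, ← jacobiSum_mul_nontrivial (by rwa [← sq]), mul_comm]

section CubicPeriodRelations

variable {F : Type*} [Field F] {ω g h : F} {s v : ℤ} {G : ℕ → F}

theorem mul_eq_of_cubic_period_relations (h3 : (3 : F) ≠ 0) (hω : ω ^ 2 + ω + 1 = 0)
    (hg : g ^ 2 = (3 * s + 2 + 3 * v * ω) * h) (hh : h ^ 2 = (3 * s + 2 + 3 * v * ω ^ 2) * g)
    (hgh : g * h = (3 * s + 2) ^ 2 - (3 * s + 2) * (3 * v) + (3 * v) ^ 2)
    (hG : ∀ j, 3 * G j = -1 + ω ^ (2 * j) * g + ω ^ j * h) :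
    G 0 * G 1 = ((s ^ 2 + s - s * v + v ^ 2 : ℤ) : F) * G 0
      + ((s ^ 2 + s - s * v + v ^ 2 - v : ℤ) : F) * G 1
      + (((s + 1) ^ 2 - (s + 1) * v + v ^ 2 : ℤ) : F) * G 2 := by
  have hω3 : ω ^ 3 = 1 := by linear_combination (ω - 1) * hω
  have h0 : 3 * G 0 = -1 + g + h := by simpa using hG 0
  have h1 : 3 * G 1 = -1 + ω ^ 2 * g + ω * h := by simpa using hG 1
  have h2 : 3 * G 2 = -1 + ω * g + ω ^ 2 * h := by linear_combination hG 2 + ω * g * hω3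
  have hsum : G 0 + G 1 + G 2 = -1 :=
    mul_left_cancel₀ h3 (by linear_combination h0 + h1 + h2 + (g + h) * hω)
  have key : 9 * (G 0 * G 1) = 1 - ((3 * s + 2) ^ 2 - (3 * s + 2) * (3 * v) + (3 * v) ^ 2)
      + (3 * s + 3) * (3 * G 2 + 1) + 3 * v * (3 * G 0 + 1) := by
    linear_combination (3 * G 1) * h0 + (-1 + g + h) * h1 - (3 * s + 3) * h2 - 3 * v * h0
      + ω ^ 2 * hg + ω * hh + (ω + ω ^ 2) * hgh
      + ((3 * s + 2) ^ 2 - (3 * s + 2) * (3 * v) + (3 * v) ^ 2 - g - h) * hω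
      + 3 * v * (g + h) * hω3
  have h9 : (9 : F) = 3 * 3 := by norm_num
  push_cast
  refine mul_left_cancel₀ (h9 ▸ mul_ne_zero h3 h3) ?_
  linear_combination key + (4 - ((3 * s + 2) ^ 2 - (3 * s + 2) * (3 * v) + (3 * v) ^ 2)
    + 3 * s + 3 * v) * hsum

theorem cubic_periods_add_three (h3 : (3 : F) ≠ 0) (hω : ω ^ 2 + ω + 1 = 0)
    (hG : ∀ j, 3 * G j = -1 + ω ^ (2 * j) * g + ω ^ j * h) (j : ℕ) : G (j + 3) = G j := by
  have hω3 : ω ^ 3 = 1 := by linear_combination (ω - 1) * hω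
  refine mul_left_cancel₀ h3 ?_
  rw [hG, hG]
  linear_combination (ω ^ (2 * j) * (ω ^ 3 + 1) * g + ω ^ j * h) * hω3

theorem mul_succ_eq_of_cubic_period_relations (h3 : (3 : F) ≠ 0) (hω : ω ^ 2 + ω + 1 = 0)
    (hg : g ^ 2 = (3 * s + 2 + 3 * v * ω) * h) (hh : h ^ 2 = (3 * s + 2 + 3 * v * ω ^ 2) * g)
    (hgh : g * h = (3 * s + 2) ^ 2 - (3 * s + 2) * (3 * v) + (3 * v) ^ 2)
    (hG : ∀ j, 3 * G j = -1 + ω ^ (2 * j) * g + ω ^ j * h) (j : ℕ) :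
    G j * G (j + 1) = ((s ^ 2 + s - s * v + v ^ 2 : ℤ) : F) * G j
      + ((s ^ 2 + s - s * v + v ^ 2 - v : ℤ) : F) * G (j + 1)
      + (((s + 1) ^ 2 - (s + 1) * v + v ^ 2 : ℤ) : F) * G (j + 2) := by
  have hω3 : ω ^ (3 * j) = 1 := by
    rw [pow_mul, show ω ^ 3 = 1 by linear_combination (ω - 1) * hω, one_pow]
  refine mul_eq_of_cubic_period_relations (g := ω ^ (2 * j) * g) (h := ω ^ j * h)
    (G := fun i ↦ G (j + i)) h3 hω ?_ ?_ ?_ fun i ↦ ?_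
  · linear_combination ω ^ (4 * j) * hg + (3 * s + 2 + 3 * v * ω) * ω ^ j * h * hω3
  · linear_combination ω ^ (2 * j) * hh
  · linear_combination ω ^ (3 * j) * hgh
      + ((3 * s + 2) ^ 2 - (3 * s + 2) * (3 * v) + (3 * v) ^ 2) * hω3
  · rw [hG]
    ring

end CubicPeriodRelations

theorem isPrimitiveRoot_zeta3 : IsPrimitiveRoot zeta3 3 := by
  simpa [zeta3] using Complex.isPrimitiveRoot_exp 3 (by norm_num)

theorem star_zeta3 : star zeta3 = zeta3 ^ 2 := by
  rw [← starRingEnd_apply, ← Complex.inv_eq_conj (isPrimitiveRoot_zeta3.norm'_eq_one three_ne_zero),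
    inv_eq_of_mul_eq_one_left (by rw [← pow_succ, isPrimitiveRoot_zeta3.pow_eq_one])]

theorem isPrimitiveRoot_zetaC (p : ℕ) [NeZero p] : IsPrimitiveRoot (zetaC p) p := by
  simpa [zetaC] using Complex.isPrimitiveRoot_exp p (NeZero.ne p)

noncomputable def zetaAddChar (p : ℕ) [NeZero p] : AddChar (ZMod p) ℂ :=
  AddChar.zmodChar p (isPrimitiveRoot_zetaC p).pow_eq_one

theorem zetaAddChar_apply (p : ℕ) [NeZero p] (x : ZMod p) : zetaAddChar p x = zetaC p ^ x.val :=
  AddChar.zmodChar_apply _ x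

theorem isPrimitive_zetaAddChar (p : ℕ) [NeZero p] : (zetaAddChar p).IsPrimitive :=
  AddChar.zmodChar_primitive_of_primitive_root p (isPrimitiveRoot_zetaC p)

theorem three_mul_gaussPeriodP {p : ℕ} [NeZero p] [Fact p.Prime] {χ : MulChar (ZMod p) ℂ}
    (hχ : χ ^ 3 = 1) (j : ℕ) :
    3 * gaussPeriodP p (fun x ↦ χ x) j = -1 + zeta3 ^ (2 * j) * gaussSum χ (zetaAddChar p)
      + zeta3 ^ j * gaussSum (χ ^ 2) (zetaAddChar p) := by
  classical
  set ψ := zetaAddChar p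
  have hpoint (x : ZMod p) : 3 * (if x ≠ 0 ∧ χ x = zeta3 ^ j then ψ x else 0)
      = (1 + zeta3 ^ (2 * j) * χ x + zeta3 ^ j * (χ ^ 2) x - if x = 0 then 1 else 0) * ψ x := by
    rcases eq_or_ne x 0 with rfl | hx
    · simp [MulChar.map_zero]
    have ht : χ x ^ 3 = 1 := by
      rw [← MulChar.pow_apply' χ three_ne_zero, hχ, MulChar.one_apply (isUnit_iff_ne_zero.mpr hx)]
    rw [MulChar.pow_apply' χ two_ne_zero,
      one_add_mul_add_mul_sq_eq_ite isPrimitiveRoot_zeta3.pow_eq_one ht j]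
    split_ifs <;> simp_all
  calc 3 * gaussPeriodP p (fun x ↦ χ x) j
      = ∑ x, 3 * (if x ≠ 0 ∧ χ x = zeta3 ^ j then ψ x else 0) := by
        simp only [gaussPeriodP, sum_filter, mul_sum, ψ, zetaAddChar_apply]
    _ = ∑ x, (1 + zeta3 ^ (2 * j) * χ x + zeta3 ^ j * (χ ^ 2) x - if x = 0 then 1 else 0) * ψ x :=
        sum_congr rfl fun x _ ↦ hpoint x
    _ = ∑ x, ψ x + zeta3 ^ (2 * j) * gaussSum χ ψ + zeta3 ^ j * gaussSum (χ ^ 2) ψ - ψ 0 := by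
        simp only [sub_mul, add_mul, sum_sub_distrib, sum_add_distrib, one_mul, mul_assoc,
          ← mul_sum, ite_mul, zero_mul, sum_ite_eq', mem_univ, if_true, gaussSum]
    _ = _ := by
        have hψ : ψ ≠ 1 := by simpa using isPrimitive_zetaAddChar p one_ne_zero
        rw [AddChar.sum_eq_zero_of_ne_one hψ, AddChar.map_zero_eq_one]
        ring

theorem exists_cubic_gaussSum_relations {p : ℕ} [NeZero p] [Fact p.Prime]
    {χ : MulChar (ZMod p) ℂ} (hχ : orderOf χ = 3) :
    ∃ s v : ℤ, (p : ℤ) = (3 * s + 2) ^ 2 - (3 * s + 2) * (3 * v) + (3 * v) ^ 2 ∧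
      gaussSum χ (zetaAddChar p) ^ 2
        = (3 * s + 2 + 3 * v * zeta3) * gaussSum (χ ^ 2) (zetaAddChar p) ∧
      gaussSum (χ ^ 2) (zetaAddChar p) ^ 2
        = (3 * s + 2 + 3 * v * zeta3 ^ 2) * gaussSum χ (zetaAddChar p) ∧
      gaussSum χ (zetaAddChar p) * gaussSum (χ ^ 2) (zetaAddChar p)
        = (3 * s + 2) ^ 2 - (3 * s + 2) * (3 * v) + (3 * v) ^ 2 := by
  have hχ3 : χ ^ 3 = 1 := hχ ▸ pow_orderOf_eq_one χ
  have hχ1 : χ ≠ 1 := by rintro rfl; simp at hχ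
  have hχ2 : χ ^ 2 ≠ 1 := fun h ↦ by simpa [hχ] using orderOf_dvd_of_pow_eq_one h
  have hinv : χ⁻¹ = χ ^ 2 := inv_eq_of_mul_eq_one_right (by rw [← pow_succ', hχ3])
  have hω := isPrimitiveRoot_zeta3.sq_add_self_add_one
  obtain ⟨s, v, hJ⟩ := exists_jacobiSum_eq_of_pow_three_eq_one hχ3 hχ3
    (hχ ▸ χ.orderOf_dvd_card_sub_one) isPrimitiveRoot_zeta3
  have hK : jacobiSum (χ ^ 2) (χ ^ 2) = 3 * s + 2 + 3 * v * zeta3 ^ 2 := by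
    rw [← hinv, ← star_jacobiSum, hJ]
    simp [star_zeta3]
  have hJK : jacobiSum χ χ * jacobiSum (χ ^ 2) (χ ^ 2) = p := by
    have hchar : ringChar ℂ ≠ ringChar (ZMod p) := by
      rw [ringChar.eq_zero, ZMod.ringChar_zmod_n]
      exact (NeZero.ne p).symm
    have h := jacobiSum_mul_jacobiSum_inv hchar hχ1 hχ1 (by rwa [← sq])
    rwa [ZMod.card, hinv] at h
  have hpC : (p : ℂ) = (3 * s + 2) ^ 2 - (3 * s + 2) * (3 * v) + (3 * v) ^ 2 := by
    rw [← hJK, hJ, hK]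
    linear_combination ((3 * s + 2) * (3 * v) + (3 * v) ^ 2 * (zeta3 - 1)) * hω
  refine ⟨s, v, by exact_mod_cast hpC, ?_, ?_, ?_⟩
  · rw [← hJ]
    exact gaussSum_sq_eq_jacobiSum_mul hχ2 _
  · have hχ4 : (χ ^ 2) ^ 2 = χ := by rw [← pow_mul, pow_succ, hχ3, one_mul]
    rw [← hK, gaussSum_sq_eq_jacobiSum_mul (by rwa [hχ4]), hχ4]
  · rw [← hpC]
    have h := gaussSum_mul_gaussSum_pow_orderOf_sub_one hχ1 (isPrimitive_zetaAddChar p)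
    rwa [hχ, MulChar.val_neg_one_eq_one_of_odd_order (by decide) hχ3, ZMod.card, one_mul] at h

theorem stmt12_general (p : ℕ) [NeZero p] (hp : p.Prime)
    (χ : MulChar (ZMod p) ℂ) (hord : orderOf χ = 3) :
    ∃ u v a b c : ℤ,
      4 * (p : ℤ) = u ^ 2 + 27 * v ^ 2 ∧ u % 3 = 1 ∧
      18 * a = 2 * (p : ℤ) - u + 9 * v - 4 ∧
      18 * b = 2 * (p : ℤ) - u - 9 * v - 4 ∧
      9 * c = (p : ℤ) + 1 + u ∧
      gaussPeriodP p (fun x => χ x) 0 * gaussPeriodP p (fun x => χ x) 1 =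
        (a : ℂ) * gaussPeriodP p (fun x => χ x) 0 + (b : ℂ) * gaussPeriodP p (fun x => χ x) 1 +
          (c : ℂ) * gaussPeriodP p (fun x => χ x) 2 ∧
      gaussPeriodP p (fun x => χ x) 1 * gaussPeriodP p (fun x => χ x) 2 =
        (a : ℂ) * gaussPeriodP p (fun x => χ x) 1 + (b : ℂ) * gaussPeriodP p (fun x => χ x) 2 +
          (c : ℂ) * gaussPeriodP p (fun x => χ x) 0 ∧
      gaussPeriodP p (fun x => χ x) 2 * gaussPeriodP p (fun x => χ x) 0 =
        (a : ℂ) * gaussPeriodP p (fun x => χ x) 2 + (b : ℂ) * gaussPeriodP p (fun x => χ x) 0 +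
          (c : ℂ) * gaussPeriodP p (fun x => χ x) 1 := by
  have : Fact p.Prime := ⟨hp⟩
  obtain ⟨s, v, hpZ, hg, hh, hgh⟩ := exists_cubic_gaussSum_relations hord
  have hω := isPrimitiveRoot_zeta3.sq_add_self_add_one
  have hG := three_mul_gaussPeriodP (hord ▸ pow_orderOf_eq_one χ)
  have hmul := mul_succ_eq_of_cubic_period_relations three_ne_zero hω hg hh hgh hG
  have hper := cubic_periods_add_three three_ne_zero hω hG
  refine ⟨6 * s + 4 - 3 * v, v, s ^ 2 + s - s * v + v ^ 2, s ^ 2 + s - s * v + v ^ 2 - v,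
    (s + 1) ^ 2 - (s + 1) * v + v ^ 2, by rw [hpZ]; ring, by omega, by rw [hpZ]; ring,
    by rw [hpZ]; ring, by rw [hpZ]; ring, hmul 0, ?_, ?_⟩
  · rw [← hper 0]
    exact hmul 1
  · rw [← hper 0, ← hper 1]
    exact hmul 2

theorem stmt12 (p : ℕ) [NeZero p] (hp : p.Prime) (hp6 : p % 6 = 1)
    (χ : MulChar (ZMod p) ℂ) (hord : orderOf χ = 3) :
    ∃ u v a b c : ℤ,
      4 * (p : ℤ) = u ^ 2 + 27 * v ^ 2 ∧ u % 3 = 1 ∧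
      18 * a = 2 * (p : ℤ) - u + 9 * v - 4 ∧
      18 * b = 2 * (p : ℤ) - u - 9 * v - 4 ∧
      9 * c = (p : ℤ) + 1 + u ∧
      gaussPeriodP p (fun x => χ x) 0 * gaussPeriodP p (fun x => χ x) 1 =
        (a : ℂ) * gaussPeriodP p (fun x => χ x) 0 + (b : ℂ) * gaussPeriodP p (fun x => χ x) 1 +
          (c : ℂ) * gaussPeriodP p (fun x => χ x) 2 ∧
      gaussPeriodP p (fun x => χ x) 1 * gaussPeriodP p (fun x => χ x) 2 =
        (a : ℂ) * gaussPeriodP p (fun x => χ x) 1 + (b : ℂ) * gaussPeriodP p (fun x => χ x) 2 +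
          (c : ℂ) * gaussPeriodP p (fun x => χ x) 0 ∧
      gaussPeriodP p (fun x => χ x) 2 * gaussPeriodP p (fun x => χ x) 0 =
        (a : ℂ) * gaussPeriodP p (fun x => χ x) 2 + (b : ℂ) * gaussPeriodP p (fun x => χ x) 0 +
          (c : ℂ) * gaussPeriodP p (fun x => χ x) 1 :=
  stmt12_general p hp χ hord
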